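/- Let S be a symmetric d×d real matrix with spectral radius ρ(S) = max(|λ_max(S)|, |λ_min(S)|), and let c > 1, m ∈ {2,3,4}. Then the optimal signed splitting gain satisfies G_m^{−c} ≤ −κ_m · ρ(S), where κ₂ = (c−1)/(c+1) and κ_m = (c−1)/2 for m ≥ 3. Consequently G_m^{−c} < 0 unless S = 0. -/

import Mathlib

/-!
If `u` is a unit eigenvector of `S` with eigenvalue `λ`, the displacements `δᵢ = aᵢ • u` turn
the gain into `λ * ∑ wᵢ aᵢ²` and the constraints into scalar ones on `(w, a)`. Taking for `λ`
an extreme eigenvalue of modulus `ρ`, it remains to find scalar splittings with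
`∑ wᵢ aᵢ² ≤ -κ_m` (when `λ = ρ`) and with `∑ wᵢ aᵢ² ≥ κ_m` (when `λ = -ρ`). For `m = 2` take
`w = ((c+1)/2, (1-c)/2)`, `a = ((c-1)/(c+1), 1)`, resp. `w = (1/2, 1/2)`, `a = (1, -1)`; for
`m ≥ 3` take `w = (1 - 2t, t, t)`, `a = (0, 1, -1)` with `t = (1-c)/4`, resp. `t = (c+1)/4`,
padded with zeros. A nonzero symmetric matrix has a nonzero eigenvalue, so `ρ > 0` then.
-/

open Matrix BigOperators

structure IsSignedSplitting {ι : Type*} [Fintype ι] (c : ℝ) (w a : ι → ℝ) : Prop where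
  sum_weight : ∑ i, w i = 1
  sum_abs_weight_le : ∑ i, |w i| ≤ c
  sum_weight_mul_amplitude : ∑ i, w i * a i = 0
  abs_amplitude_le : ∀ i, |a i| ≤ 1

def signedSplittingGains {n : Type*} [Fintype n] (c : ℝ) (S : Matrix n n ℝ)
    (ι : Type*) [Fintype ι] : Set ℝ :=
  {t : ℝ | ∃ (w : ι → ℝ) (δ : ι → n → ℝ),
      ∑ i, w i = 1 ∧ ∑ i, |w i| ≤ c ∧ ∑ i, w i • δ i = 0 ∧
      (∀ i, δ i ⬝ᵥ δ i ≤ 1) ∧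
      t = ∑ i, w i * (δ i ⬝ᵥ S.mulVec (δ i))}

noncomputable def splittingConstant (m : ℕ) (c : ℝ) : ℝ :=
  if m = 2 then (c - 1) / (c + 1) else (c - 1) / 2

section Extend

variable {ι κ : Type*} [Fintype ι] [Fintype κ] {e : ι → κ}

theorem Function.Injective.sum_apply_extend_zero {α β M : Type*} [Zero α] [Zero β]
    [AddCommMonoid M] (he : e.Injective) (F : α → β → M) (hF : F 0 0 = 0) (w : ι → α)
    (a : ι → β) :
    ∑ k, F (e.extend w 0 k) (e.extend a 0 k) = ∑ i, F (w i) (a i) := by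
  refine (Fintype.sum_of_injective e he _ _ (fun k hk => ?_) fun i => ?_).symm
  · rw [Function.extend_apply' _ _ _ fun ⟨i, hi⟩ => hk ⟨i, hi⟩,
      Function.extend_apply' _ _ _ fun ⟨i, hi⟩ => hk ⟨i, hi⟩]
    exact hF
  · rw [he.extend_apply, he.extend_apply]

theorem IsSignedSplitting.extend {c : ℝ} {w a : ι → ℝ} (h : IsSignedSplitting c w a)
    (he : e.Injective) : IsSignedSplitting c (e.extend w 0) (e.extend a 0) where
  sum_weight := (he.sum_apply_extend_zero (fun x _ => x) rfl w a).trans h.sum_weight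
  sum_abs_weight_le :=
    (he.sum_apply_extend_zero (fun x _ => |x|) abs_zero w a).trans_le h.sum_abs_weight_le
  sum_weight_mul_amplitude :=
    (he.sum_apply_extend_zero (· * ·) (mul_zero 0) w a).trans h.sum_weight_mul_amplitude
  abs_amplitude_le k := by
    by_cases hk : ∃ i, e i = k
    · obtain ⟨i, rfl⟩ := hk
      rw [he.extend_apply]
      exact h.abs_amplitude_le i
    · rw [Function.extend_apply' _ _ _ hk]
      simp

theorem IsSignedSplitting.exists_fin_of_le {n m : ℕ} (hnm : n ≤ m) {c : ℝ} {w a : Fin n → ℝ}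
    (h : IsSignedSplitting c w a) :
    ∃ w' a' : Fin m → ℝ, IsSignedSplitting c w' a' ∧
      ∑ i, w' i * a' i ^ 2 = ∑ i, w i * a i ^ 2 :=
  ⟨_, _, h.extend (Fin.castLE_injective hnm),
    (Fin.castLE_injective hnm).sum_apply_extend_zero (fun x y => x * y ^ 2) (by simp) w a⟩

end Extend

theorem exists_isSignedSplitting_fin_two_sum_eq_neg {c : ℝ} (hc : 1 < c) :
    ∃ w a : Fin 2 → ℝ, IsSignedSplitting c w a ∧
      ∑ i, w i * a i ^ 2 = -((c - 1) / (c + 1)) := by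
  have hc1 : 0 < c + 1 := by linarith
  refine ⟨![(c + 1) / 2, (1 - c) / 2], ![(c - 1) / (c + 1), 1], ⟨?_, ?_, ?_, ?_⟩, ?_⟩
  all_goals simp only [Fin.sum_univ_two, Fin.forall_fin_two, Matrix.cons_val_zero,
    Matrix.cons_val_one]
  · ring
  · rw [abs_of_pos (by linarith), abs_of_neg (by linarith)]
    linarith
  · field_simp
    ring
  · refine ⟨?_, by simp⟩
    rw [abs_of_nonneg (by positivity), div_le_one hc1]
    linarith
  · field_simp
    ring

theorem exists_isSignedSplitting_fin_two_sum_eq_one {c : ℝ} (hc : 1 ≤ c) :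
    ∃ w a : Fin 2 → ℝ, IsSignedSplitting c w a ∧ ∑ i, w i * a i ^ 2 = 1 := by
  refine ⟨![1 / 2, 1 / 2], ![1, -1], ⟨?_, ?_, ?_, ?_⟩, ?_⟩
  all_goals norm_num [Fin.sum_univ_two, Fin.forall_fin_two]
  exact hc

theorem exists_isSignedSplitting_fin_three_sum_eq {c t : ℝ} (ht : |1 - 2 * t| + 2 * |t| ≤ c) :
    ∃ w a : Fin 3 → ℝ, IsSignedSplitting c w a ∧ ∑ i, w i * a i ^ 2 = 2 * t := by
  refine ⟨![1 - 2 * t, t, t], ![0, 1, -1], ⟨?_, ?_, ?_, ?_⟩, ?_⟩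
  all_goals norm_num [Fin.sum_univ_three, Fin.forall_fin_succ, Matrix.cons_val_two,
    Matrix.tail_cons]
  · ring
  · linarith
  · ring

theorem exists_isSignedSplitting_sum_le_neg_splittingConstant {m : ℕ} (hm : 2 ≤ m) {c : ℝ}
    (hc : 1 < c) : ∃ w a : Fin m → ℝ, IsSignedSplitting c w a ∧
      ∑ i, w i * a i ^ 2 ≤ -splittingConstant m c := by
  rcases hm.eq_or_lt with rfl | hm3
  · obtain ⟨w, a, h, hsum⟩ := exists_isSignedSplitting_fin_two_sum_eq_neg hc
    exact ⟨w, a, h, hsum.le⟩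
  · obtain ⟨w, a, h, hsum⟩ := exists_isSignedSplitting_fin_three_sum_eq
      (c := c) (t := (1 - c) / 4)
      (by rw [abs_of_nonneg (by linarith), abs_of_nonpos (by linarith)]; linarith)
    obtain ⟨w', a', h', hsum'⟩ := h.exists_fin_of_le hm3
    refine ⟨w', a', h', le_of_eq ?_⟩
    rw [hsum', hsum, splittingConstant, if_neg hm3.ne']
    ring

theorem exists_isSignedSplitting_splittingConstant_le_sum {m : ℕ} (hm : 2 ≤ m) {c : ℝ}
    (hc : 1 < c) : ∃ w a : Fin m → ℝ, IsSignedSplitting c w a ∧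
      splittingConstant m c ≤ ∑ i, w i * a i ^ 2 := by
  rcases hm.eq_or_lt with rfl | hm3
  · obtain ⟨w, a, h, hsum⟩ := exists_isSignedSplitting_fin_two_sum_eq_one hc.le
    refine ⟨w, a, h, ?_⟩
    rw [hsum, splittingConstant, if_pos rfl, div_le_one (by linarith)]
    linarith
  · obtain ⟨w, a, h, hsum⟩ := exists_isSignedSplitting_fin_three_sum_eq
      (c := c) (t := (c + 1) / 4)
      (by rw [abs_of_nonpos (by linarith), abs_of_nonneg (by linarith)]; linarith)
    obtain ⟨w', a', h', hsum'⟩ := h.exists_fin_of_le hm3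
    refine ⟨w', a', h', ?_⟩
    rw [hsum', hsum, splittingConstant, if_neg hm3.ne']
    linarith

theorem splittingConstant_pos (m : ℕ) {c : ℝ} (hc : 1 < c) : 0 < splittingConstant m c := by
  unfold splittingConstant
  split_ifs <;> exact div_pos (by linarith) (by linarith)

section Gains

variable {n ι : Type*} [Fintype n] [Fintype ι]

theorem exists_dotProduct_self_eq_one_of_mulVec_eq_smul {S : Matrix n n ℝ} {μ : ℝ} {v : n → ℝ}
    (hv : v ≠ 0) (hev : S *ᵥ v = μ • v) : ∃ u : n → ℝ, u ⬝ᵥ u = 1 ∧ S *ᵥ u = μ • u := by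
  have hpos : 0 < v ⬝ᵥ v := by simpa using dotProduct_self_star_pos_iff.mpr hv
  refine ⟨(√(v ⬝ᵥ v))⁻¹ • v, ?_, by rw [mulVec_smul, hev, smul_comm]⟩
  rw [smul_dotProduct, dotProduct_smul, smul_smul, smul_eq_mul, ← mul_inv,
    Real.mul_self_sqrt hpos.le, inv_mul_cancel₀ hpos.ne']

theorem mul_sum_mem_signedSplittingGains {c : ℝ} {S : Matrix n n ℝ} {v : n → ℝ} {μ : ℝ}
    (hv : v ≠ 0) (hev : S *ᵥ v = μ • v) {w a : ι → ℝ} (h : IsSignedSplitting c w a) :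
    μ * ∑ i, w i * a i ^ 2 ∈ signedSplittingGains c S ι := by
  obtain ⟨u, hu, hevu⟩ := exists_dotProduct_self_eq_one_of_mulVec_eq_smul hv hev
  refine ⟨w, fun i => a i • u, h.sum_weight, h.sum_abs_weight_le, ?_, fun i => ?_, ?_⟩
  · simp_rw [smul_smul, ← Finset.sum_smul, h.sum_weight_mul_amplitude, zero_smul]
  · rw [smul_dotProduct, dotProduct_smul, hu, smul_eq_mul, smul_eq_mul, mul_one, ← sq,
      sq_le_one_iff_abs_le_one]
    exact h.abs_amplitude_le i
  · simp_rw [mulVec_smul, hevu, smul_dotProduct, dotProduct_smul, hu, Finset.mul_sum,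
      smul_eq_mul]
    refine Finset.sum_congr rfl fun i _ => ?_
    ring

end Gains

theorem max_abs_eq_or_eq_neg {a b : ℝ} (hba : b ≤ a) : max |a| |b| = a ∨ max |a| |b| = -b := by
  grind

theorem max_abs_pos_of_isSymm_ne_zero {n : Type*} [Fintype n]
    {S : Matrix n n ℝ} (hS : S.IsSymm) (hne : S ≠ 0) {lmin lmax : ℝ}
    (hmin : lmin ∈ lowerBounds {μ : ℝ | ∃ v : n → ℝ, v ≠ 0 ∧ S *ᵥ v = μ • v})
    (hmax : lmax ∈ upperBounds {μ : ℝ | ∃ v : n → ℝ, v ≠ 0 ∧ S *ᵥ v = μ • v}) :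
    0 < max |lmax| |lmin| := by
  have hH : S.IsHermitian := by rwa [IsHermitian, conjTranspose_eq_transpose_of_trivial]
  obtain ⟨v, t, ht, hv, hev⟩ := hH.exists_eigenvector_of_ne_zero hne
  have : |t| ≤ max |lmax| |lmin| := abs_le.2
    ⟨by linarith [neg_abs_le lmin, le_max_right |lmax| |lmin|, hmin ⟨v, hv, hev⟩],
      by linarith [le_abs_self lmax, le_max_left |lmax| |lmin|, hmax ⟨v, hv, hev⟩]⟩
  exact (abs_pos.2 ht).trans_le this

theorem stmt_11 (d m : ℕ) (hm : m = 2 ∨ m = 3 ∨ m = 4) (c : ℝ) (hc : 1 < c)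
    (S : Matrix (Fin d) (Fin d) ℝ) (hS : S.IsSymm) (lmin lmax : ℝ)
    (hmin : IsLeast {μ : ℝ | ∃ v : Fin d → ℝ, v ≠ 0 ∧ S.mulVec v = μ • v} lmin)
    (hmax : IsGreatest {μ : ℝ | ∃ v : Fin d → ℝ, v ≠ 0 ∧ S.mulVec v = μ • v} lmax)
    (G : ℝ)
    (hG : IsLeast {t : ℝ | ∃ (w : Fin m → ℝ) (δ : Fin m → Fin d → ℝ),
      ∑ i, w i = 1 ∧ ∑ i, |w i| ≤ c ∧ ∑ i, w i • δ i = 0 ∧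
      (∀ i, δ i ⬝ᵥ δ i ≤ 1) ∧
      t = ∑ i, w i * (δ i ⬝ᵥ S.mulVec (δ i))} G) :
    G ≤ -(if m = 2 then (c - 1) / (c + 1) else (c - 1) / 2) * max |lmax| |lmin| ∧
      (S ≠ 0 → G < 0) := by
  have h2m : 2 ≤ m := by omega
  have hρ : 0 ≤ max |lmax| |lmin| := le_max_of_le_left (abs_nonneg lmax)
  have hκ := splittingConstant_pos m hc
  have hbound : G ≤ -splittingConstant m c * max |lmax| |lmin| := by
    rcases max_abs_eq_or_eq_neg (hmin.2 hmax.1) with hρmax | hρmin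
    · obtain ⟨v, hv, hev⟩ := hmax.1
      obtain ⟨w, a, h, hsum⟩ := exists_isSignedSplitting_sum_le_neg_splittingConstant h2m hc
      have := hG.2 (mul_sum_mem_signedSplittingGains hv hev h)
      rw [hρmax] at hρ ⊢
      nlinarith
    · obtain ⟨v, hv, hev⟩ := hmin.1
      obtain ⟨w, a, h, hsum⟩ := exists_isSignedSplitting_splittingConstant_le_sum h2m hc
      have := hG.2 (mul_sum_mem_signedSplittingGains hv hev h)
      rw [hρmin] at hρ ⊢
      nlinarith
  exact ⟨hbound, fun hne => hbound.trans_lt <| mul_neg_of_neg_of_pos (neg_lt_zero.2 hκ)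
    (max_abs_pos_of_isSymm_ne_zero hS hne hmin.2 hmax.2)⟩
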